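/- Let D : A → A/J be a ℂ-linear map satisfying the Leibniz rule D(f * g) = π(f)·D(g) + D(f)·π(g) for all f, g ∈ A, and define φ : S → A/J by φ(s) = D(δ_s)·π(δ_{s*}). Then for all s, t ∈ S the cocycle identity φ(s t) = π(δ_s)·φ(t)·π(δ_{s*}) + φ(s) holds. -/

import Mathlib

/-! Expanding `φ (s t)` with the Leibniz rule and `(s t)* = t* s*` leaves
`π(δ_s) φ(t) π(δ_{s*}) + D(δ_s) π(δ_{t t* s*})`. The second term is `φ(s)`: idempotents
of an inverse semigroup commute, so `δ_e + J` is a left identity on every coset `δ_u + J`. -/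

open MonoidAlgebra

/-- An inverse semigroup: a semigroup in which every element `s` has a unique
generalized inverse `s*` with `s * s* * s = s` and `s* * s * s* = s*`. -/
class InverseSemigroup (S : Type*) extends Semigroup S where
  star : S → S
  star_left : ∀ s : S, s * star s * s = s
  star_right : ∀ s : S, star s * s * star s = star s
  star_unique : ∀ s t : S, s * t * s = s → t * s * t = t → t = star s

variable (S : Type*) [InverseSemigroup S]

/-- The ℂ-linear span in the semigroup algebra `A = MonoidAlgebra ℂ S` of the set
`{δ_{s e t} - δ_{s t} : s, t ∈ S, e ∈ E}`, where `E = {e : e * e = e}` is the set of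
idempotents of `S`. -/
noncomputable def J : Submodule ℂ (MonoidAlgebra ℂ S) :=
  Submodule.span ℂ { x | ∃ s t e : S, e * e = e ∧
    x = single (s * e * t) (1 : ℂ) - single (s * t) (1 : ℂ) }

variable {S}

theorem mul_mem_J (f : MonoidAlgebra ℂ S) {x : MonoidAlgebra ℂ S} (hx : x ∈ J S) :
    f * x ∈ J S := by
  induction hx using Submodule.span_induction with
  | mem x hx =>
    obtain ⟨s, t, e, he, rfl⟩ := hx
    induction f using MonoidAlgebra.induction_linear with
    | zero => simp
    | add a b ha hb => rw [add_mul]; exact (J S).add_mem ha hb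
    | single a b =>
      have : (single a b : MonoidAlgebra ℂ S) *
            (single (s * e * t) (1 : ℂ) - single (s * t) (1 : ℂ))
          = b • (single ((a * s) * e * t) (1 : ℂ) - single ((a * s) * t) (1 : ℂ)) := by
        rw [mul_sub, single_mul_single, single_mul_single, smul_sub, smul_single', smul_single']
        simp [mul_assoc]
      rw [this]
      exact (J S).smul_mem _ (Submodule.subset_span ⟨a * s, t, e, he, rfl⟩)
  | zero => simp
  | add x y hx hy ihx ihy => rw [mul_add]; exact (J S).add_mem ihx ihy
  | smul c x hx ih => rw [mul_smul_comm]; exact (J S).smul_mem _ ih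

theorem J_mul_mem (f : MonoidAlgebra ℂ S) {x : MonoidAlgebra ℂ S} (hx : x ∈ J S) :
    x * f ∈ J S := by
  induction hx using Submodule.span_induction with
  | mem x hx =>
    obtain ⟨s, t, e, he, rfl⟩ := hx
    induction f using MonoidAlgebra.induction_linear with
    | zero => simp
    | add a b ha hb => rw [mul_add]; exact (J S).add_mem ha hb
    | single a b =>
      have : (single (s * e * t) (1 : ℂ) - single (s * t) (1 : ℂ)) *
            (single a b : MonoidAlgebra ℂ S)
          = b • (single (s * e * (t * a)) (1 : ℂ) - single (s * (t * a)) (1 : ℂ)) := by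
        rw [sub_mul, single_mul_single, single_mul_single, smul_sub, smul_single', smul_single']
        simp [mul_assoc]
      rw [this]
      exact (J S).smul_mem _ (Submodule.subset_span ⟨s, t * a, e, he, rfl⟩)
  | zero => simp
  | add x y hx hy ihx ihy => rw [add_mul]; exact (J S).add_mem ihx ihy
  | smul c x hx ih => rw [smul_mul_assoc]; exact (J S).smul_mem _ ih

/-- Multiplication of cosets in the quotient algebra `A ⧸ J`, well defined
since `J` is a two-sided ideal: `(f + J) * (g + J) = f * g + J`. -/
noncomputable instance : Mul (MonoidAlgebra ℂ S ⧸ J S) :=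
  ⟨Quotient.map₂' (· * ·) (by
    intro a₁ a₂ h₁ b₁ b₂ h₂
    have h₁' : a₁ - a₂ ∈ J S := (Submodule.quotientRel_def (J S)).mp h₁
    have h₂' : b₁ - b₂ ∈ J S := (Submodule.quotientRel_def (J S)).mp h₂
    refine (Submodule.quotientRel_def (J S)).mpr ?_
    have : a₁ * b₁ - a₂ * b₂ = a₁ * (b₁ - b₂) + (a₁ - a₂) * b₂ := by
      rw [mul_sub, sub_mul]; abel
    rw [this]
    exact (J S).add_mem (mul_mem_J _ h₂') (J_mul_mem _ h₁'))⟩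

variable (S)

/-- The quotient map `π : A → A ⧸ J`, sending `f` to the coset `f + J`. -/
noncomputable def π : MonoidAlgebra ℂ S → MonoidAlgebra ℂ S ⧸ J S := Submodule.Quotient.mk

theorem π_mul (f g : MonoidAlgebra ℂ S) : π S (f * g) = π S f * π S g := rfl

namespace InverseSemigroup

variable {S : Type*} [InverseSemigroup S]

theorem star_star (s : S) : star (star s) = s :=
  (star_unique (star s) s (star_right s) (star_left s)).symm

theorem star_eq_self_of_isIdempotentElem {e : S} (he : IsIdempotentElem e) : star e = e :=
  (star_unique e e (by rw [he.eq, he.eq]) (by rw [he.eq, he.eq])).symm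

theorem isIdempotentElem_mul_star (s : S) : IsIdempotentElem (s * star s) := by
  rw [IsIdempotentElem, ← mul_assoc, star_left]

theorem isIdempotentElem_star_mul (s : S) : IsIdempotentElem (star s * s) := by
  rw [IsIdempotentElem, ← mul_assoc, star_right]

/-- With `x = (e f)*`, uniqueness of inverses forces `x = f x e`, which makes `x` idempotent;
hence so is `e f = x*`. -/
theorem isIdempotentElem_mul {e f : S} (he : IsIdempotentElem e) (hf : IsIdempotentElem f) :
    IsIdempotentElem (e * f) := by
  have hx : f * star (e * f) * e = star (e * f) := by
    refine star_unique (e * f) _ ?_ ?_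
    · calc e * f * (f * star (e * f) * e) * (e * f) = e * f * star (e * f) * (e * f) := by
            simp only [mul_assoc, hf.mul_self_mul, he.mul_self_mul]
        _ = e * f := star_left _
    · calc f * star (e * f) * e * (e * f) * (f * star (e * f) * e)
          = f * (star (e * f) * (e * f) * star (e * f)) * e := by
            simp only [mul_assoc, hf.mul_self_mul, he.mul_self_mul]
        _ = f * star (e * f) * e := by rw [star_right]
  have hstar : IsIdempotentElem (star (e * f)) :=
    calc star (e * f) * star (e * f) = f * star (e * f) * e * (f * star (e * f) * e) := by
          rw [hx]
      _ = f * (star (e * f) * (e * f) * star (e * f)) * e := by simp only [mul_assoc]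
      _ = star (e * f) := by rw [star_right, hx]
  rwa [← star_eq_self_of_isIdempotentElem hstar, star_star] at hstar

theorem commute_of_isIdempotentElem {e f : S} (he : IsIdempotentElem e)
    (hf : IsIdempotentElem f) : Commute e f := by
  have hef := isIdempotentElem_mul he hf
  refine (star_unique (e * f) (f * e) ?_ ?_ |>.trans (star_eq_self_of_isIdempotentElem hef)).symm
  · calc e * f * (f * e) * (e * f) = e * f * (e * f) := by
          simp only [mul_assoc, hf.mul_self_mul, he.mul_self_mul]
      _ = e * f := hef.eq
  · calc f * e * (e * f) * (f * e) = f * e * (f * e) := by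
          simp only [mul_assoc, hf.mul_self_mul, he.mul_self_mul]
      _ = f * e := (isIdempotentElem_mul hf he).eq

theorem star_mul (s t : S) : star (s * t) = star t * star s := by
  have hcomm : Commute (t * star t) (star s * s) :=
    commute_of_isIdempotentElem (isIdempotentElem_mul_star t) (isIdempotentElem_star_mul s)
  refine (star_unique (s * t) (star t * star s) ?_ ?_).symm
  · calc s * t * (star t * star s) * (s * t) = s * (t * star t * (star s * s)) * t := by
          simp only [mul_assoc]
      _ = s * (star s * s * (t * star t)) * t := by rw [hcomm.eq]
      _ = (s * star s * s) * (t * star t * t) := by simp only [mul_assoc]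
      _ = s * t := by rw [star_left, star_left]
  · calc star t * star s * (s * t) * (star t * star s)
          = star t * (star s * s * (t * star t)) * star s := by simp only [mul_assoc]
      _ = star t * (t * star t * (star s * s)) * star s := by rw [hcomm.eq]
      _ = (star t * t * star t) * (star s * s * star s) := by simp only [mul_assoc]
      _ = star t * star s := by rw [star_right, star_right]

end InverseSemigroup

open InverseSemigroup

theorem π_surjective : Function.Surjective (π S) := Submodule.Quotient.mk_surjective _

theorem π_add (f g : MonoidAlgebra ℂ S) : π S (f + g) = π S f + π S g :=
  Submodule.Quotient.mk_add _

variable {S}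

theorem quotient_mul_assoc (x y z : MonoidAlgebra ℂ S ⧸ J S) : x * y * z = x * (y * z) := by
  obtain ⟨f, rfl⟩ := π_surjective S x
  obtain ⟨g, rfl⟩ := π_surjective S y
  obtain ⟨h, rfl⟩ := π_surjective S z
  simp only [← π_mul, mul_assoc]

theorem quotient_add_mul (x y z : MonoidAlgebra ℂ S ⧸ J S) : (x + y) * z = x * z + y * z := by
  obtain ⟨f, rfl⟩ := π_surjective S x
  obtain ⟨g, rfl⟩ := π_surjective S y
  obtain ⟨h, rfl⟩ := π_surjective S z
  simp only [← π_add, ← π_mul, add_mul]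

theorem π_single_mul_single (s t : S) :
    π S (single (s * t) 1) = π S (single s 1) * π S (single t 1) := by
  rw [← π_mul, single_mul_single, one_mul]

/-- Rewriting `e u = (u u*) e u` by commutativity of idempotents exhibits
`δ_{e u} - δ_u = δ_{(u u*) e u} - δ_{(u u*) u}` as a generator of `J`. -/
theorem π_single_idempotent_mul_single {e : S} (he : IsIdempotentElem e) (u : S) :
    π S (single e 1) * π S (single u 1) = π S (single u 1) := by
  rw [← π_single_mul_single]
  have hu : u * star u * e * u = e * u := by
    rw [(commute_of_isIdempotentElem (isIdempotentElem_mul_star u) he).eq, mul_assoc, star_left]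
  refine (Submodule.Quotient.eq _).mpr (Submodule.subset_span ⟨u * star u, u, e, he.eq, ?_⟩)
  rw [hu, star_left]

/-- if `D : A → A ⧸ J` is a ℂ-linear map satisfying the Leibniz rule and
`φ(s) = D(δ_s) · π(δ_{s*})`, then the cocycle identity
`φ(s t) = π(δ_s) · φ(t) · π(δ_{s*}) + φ(s)` holds for all `s, t ∈ S`. -/
theorem cocycle_identity
    (D : MonoidAlgebra ℂ S →ₗ[ℂ] MonoidAlgebra ℂ S ⧸ J S)
    (hD : ∀ f g : MonoidAlgebra ℂ S, D (f * g) = π S f * D g + D f * π S g)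
    (φ : S → MonoidAlgebra ℂ S ⧸ J S)
    (hφ : ∀ s : S, φ s = D (single s (1 : ℂ)) * π S (single (InverseSemigroup.star s) (1 : ℂ))) :
    ∀ s t : S,
      φ (s * t) = π S (single s (1 : ℂ)) * φ t * π S (single (InverseSemigroup.star s) (1 : ℂ))
        + φ s := by
  intro s t
  have hst : (single (s * t) 1 : MonoidAlgebra ℂ S) = single s 1 * single t 1 := by
    rw [single_mul_single, one_mul]
  rw [hφ, hφ, hφ, hst, hD, InverseSemigroup.star_mul, π_single_mul_single, quotient_add_mul]
  congr 1
  · simp only [quotient_mul_assoc]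
  · rw [quotient_mul_assoc, ← quotient_mul_assoc (π S _), ← π_single_mul_single,
      π_single_idempotent_mul_single (isIdempotentElem_mul_star t)]
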